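/- arXiv:2204.02556 — 2 statements merged into one kernel-verified Lean document; each statement's English description precedes it below -/
import Mathlib

section
/- For n ≥ 1 and every k, the number of nonoverlapping partitions P of [n] with X(P) = k equals the number of nonoverlapping partitions of [n] with Y(P) = k. -/
/-- Maximum entry of a block. -/
def blockMax (B : Finset ℕ) : ℕ := B.sup id

/-- Minimum entry of a block (0 if empty). -/
def blockMin (B : Finset ℕ) : ℕ := B.min.getD 0

/-- The span of a block: the smallest interval of integers containing it. -/
def blockSpan (B : Finset ℕ) : Finset ℕ := Finset.Icc (blockMin B) (blockMax B)

/-- Second smallest entry of a block (0 if it does not exist). -/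
def secondMin (B : Finset ℕ) : ℕ := (B.erase (blockMin B)).min.getD 0

/-- The minimax statistic: minimum over blocks of the maximum entry. -/
def X (n : ℕ) (P : Finpartition (Finset.Icc 1 n)) : ℕ :=
  ((P.parts.image blockMax).min).getD 0

/-- The block containing 1. -/
def block1 (n : ℕ) (P : Finpartition (Finset.Icc 1 n)) : Finset ℕ :=
  P.parts.sup (fun B => if 1 ∈ B then B else ∅)

/-- The statistic Y: 1 if {1} is a singleton block, else min of r (minimum over
non-singleton blocks of their maxima) and s (second smallest entry of the block of 1). -/
def Y (n : ℕ) (P : Finpartition (Finset.Icc 1 n)) : ℕ :=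
  if ({1} : Finset ℕ) ∈ P.parts then 1
  else min ((((P.parts.filter (fun B => 2 ≤ B.card)).image blockMax).min).getD 0)
           (secondMin (block1 n P))

/-- A partition is nonoverlapping if the spans of any two blocks are disjoint or nested. -/
def Nonoverlapping (n : ℕ) (P : Finpartition (Finset.Icc 1 n)) : Prop :=
  ∀ B1 ∈ P.parts, ∀ B2 ∈ P.parts,
    Disjoint (blockSpan B1) (blockSpan B2) ∨
      blockSpan B1 ⊆ blockSpan B2 ∨ blockSpan B2 ⊆ blockSpan B1

open Finset

-- basic block lemmas
lemma getD_min_eq_min' {s : Finset ℕ} (hs : s.Nonempty) : s.min.getD 0 = s.min' hs := by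
  rw [← Finset.coe_min' hs]; rfl

lemma blockMax_eq_max' {b : Finset ℕ} (hb : b.Nonempty) : blockMax b = b.max' hb := by
  rw [blockMax, ← Finset.sup'_eq_sup hb]; rfl

lemma blockMin_eq_min' {b : Finset ℕ} (hb : b.Nonempty) : blockMin b = b.min' hb := by
  rw [blockMin, ← Finset.coe_min' hb]; rfl

lemma blockMax_mem {b : Finset ℕ} (hb : b.Nonempty) : blockMax b ∈ b := by
  rw [blockMax_eq_max' hb]; exact b.max'_mem hb

lemma blockMin_mem {b : Finset ℕ} (hb : b.Nonempty) : blockMin b ∈ b := by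
  rw [blockMin_eq_min' hb]; exact b.min'_mem hb

lemma le_blockMax {b : Finset ℕ} {a : ℕ} (h : a ∈ b) : a ≤ blockMax b := Finset.le_sup (f := id) h

lemma blockMin_le {b : Finset ℕ} {a : ℕ} (h : a ∈ b) : blockMin b ≤ a := by
  rw [blockMin_eq_min' ⟨a, h⟩]; exact Finset.min'_le _ _ h

lemma blockMax_singleton (j : ℕ) : blockMax {j} = j := by simp [blockMax]
lemma blockMin_singleton (j : ℕ) : blockMin {j} = j := by
  rw [blockMin_eq_min' ⟨j, Finset.mem_singleton_self j⟩]; simp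

lemma blockSpan_singleton (j : ℕ) : blockSpan {j} = {j} := by
  simp [blockSpan, blockMin_singleton, blockMax_singleton]

-- block1 lemmas
variable {n : ℕ} {P : Finpartition (Finset.Icc 1 n)}

lemma one_mem_ground (hn : 1 ≤ n) : (1 : ℕ) ∈ Finset.Icc 1 n := by simp [hn]

lemma part_subset {b : Finset ℕ} (hb : b ∈ P.parts) : b ⊆ Finset.Icc 1 n :=
  (P.le hb)

lemma one_le_of_mem_part {b : Finset ℕ} (hb : b ∈ P.parts) {x : ℕ} (hx : x ∈ b) : 1 ≤ x :=
  (Finset.mem_Icc.mp (part_subset hb hx)).1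

lemma block1_spec {b : Finset ℕ} (hb : b ∈ P.parts) (h1 : (1:ℕ) ∈ b) : block1 n P = b := by
  apply le_antisymm
  · apply Finset.sup_le
    intro c hc
    by_cases h : (1:ℕ) ∈ c
    · rw [if_pos h]
      exact le_of_eq (P.eq_of_mem_parts hc hb h h1)
    · rw [if_neg h]; exact bot_le
  · have := Finset.le_sup (f := fun B => if (1:ℕ) ∈ B then B else ∅) hb
    simp only [if_pos h1] at this
    exact this

lemma block1_mem (hn : 1 ≤ n) : block1 n P ∈ P.parts := by
  obtain ⟨b, hb, h1b⟩ := P.exists_mem (one_mem_ground hn)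
  rw [block1_spec hb h1b]; exact hb

lemma one_mem_block1 (hn : 1 ≤ n) : (1:ℕ) ∈ block1 n P := by
  obtain ⟨b, hb, h1b⟩ := P.exists_mem (one_mem_ground hn)
  rw [block1_spec hb h1b]; exact h1b

lemma blockMin_block1 (hn : 1 ≤ n) : blockMin (block1 n P) = 1 :=
  le_antisymm (blockMin_le (one_mem_block1 hn))
    (one_le_of_mem_part (block1_mem hn) (blockMin_mem ⟨1, one_mem_block1 hn⟩))

-- X characterization
lemma X_ge_iff (hn : 1 ≤ n) (k : ℕ) :
    k ≤ X n P ↔ ∀ b ∈ P.parts, k ≤ blockMax b := by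
  have hpn : P.parts.Nonempty := P.parts_nonempty (by
    simp only [bot_eq_empty, ne_eq, ← Finset.nonempty_iff_ne_empty]
    exact ⟨1, one_mem_ground hn⟩)
  have him : (P.parts.image blockMax).Nonempty := hpn.image _
  rw [X, getD_min_eq_min' him]
  constructor
  · intro h b hb
    exact le_trans h (Finset.min'_le _ _ (Finset.mem_image_of_mem _ hb))
  · intro h
    rw [Finset.le_min'_iff]
    intro y hy
    obtain ⟨b, hb, rfl⟩ := Finset.mem_image.mp hy
    exact h b hb

-- predicates
def predA (n k : ℕ) (P : Finpartition (Finset.Icc 1 n)) : Prop :=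
  ∀ b ∈ P.parts, k ≤ blockMax b

def predB (n k : ℕ) (P : Finpartition (Finset.Icc 1 n)) : Prop :=
  ({1} : Finset ℕ) ∉ P.parts ∧ (∀ b ∈ P.parts, 2 ≤ b.card → k ≤ blockMax b) ∧
    k ≤ secondMin (block1 n P)

lemma block1_card (hn : 1 ≤ n) (h1 : ({1} : Finset ℕ) ∉ P.parts) :
    2 ≤ (block1 n P).card := by
  have hmem := one_mem_block1 (P := P) hn
  by_contra h
  push_neg at h
  interval_cases hc : (block1 n P).card
  · exact absurd (Finset.card_eq_zero.mp hc ▸ hmem) (Finset.notMem_empty 1)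
  · obtain ⟨a, ha⟩ := Finset.card_eq_one.mp hc
    rw [ha] at hmem
    obtain rfl := Finset.mem_singleton.mp hmem
    exact h1 (ha ▸ block1_mem hn)

lemma erase_one_nonempty (hn : 1 ≤ n) (h1 : ({1} : Finset ℕ) ∉ P.parts) :
    ((block1 n P).erase (blockMin (block1 n P))).Nonempty := by
  rw [blockMin_block1 hn]
  rw [← Finset.card_pos, Finset.card_erase_of_mem (one_mem_block1 hn)]
  have := block1_card hn h1
  omega

lemma secondMin_mem (hn : 1 ≤ n) (h1 : ({1} : Finset ℕ) ∉ P.parts) :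
    secondMin (block1 n P) ∈ (block1 n P).erase 1 := by
  have hne := erase_one_nonempty hn h1
  have : secondMin (block1 n P) = ((block1 n P).erase (blockMin (block1 n P))).min' hne := by
    rw [secondMin, getD_min_eq_min' hne]
  rw [this, ← blockMin_block1 (P := P) hn]
  exact Finset.min'_mem _ _

lemma secondMin_le (hn : 1 ≤ n) (h1 : ({1} : Finset ℕ) ∉ P.parts) {x : ℕ}
    (hx : x ∈ (block1 n P).erase 1) : secondMin (block1 n P) ≤ x := by
  have hne := erase_one_nonempty hn h1
  have : secondMin (block1 n P) = ((block1 n P).erase (blockMin (block1 n P))).min' hne := by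
    rw [secondMin, getD_min_eq_min' hne]
  rw [this]
  apply Finset.min'_le
  rwa [blockMin_block1 hn]

lemma Y_ge_iff (hn : 1 ≤ n) {k : ℕ} (hk : 2 ≤ k) :
    k ≤ Y n P ↔ predB n k P := by
  rw [Y]
  by_cases h1 : ({1} : Finset ℕ) ∈ P.parts
  · rw [if_pos h1]
    simp only [predB]
    constructor
    · intro h; omega
    · intro h; exact absurd h1 h.1
  · rw [if_neg h1]
    have hb1 : block1 n P ∈ P.parts.filter (fun B => 2 ≤ B.card) := by
      rw [Finset.mem_filter]
      exact ⟨block1_mem hn, block1_card hn h1⟩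
    have him : ((P.parts.filter (fun B => 2 ≤ B.card)).image blockMax).Nonempty :=
      ⟨_, Finset.mem_image_of_mem _ hb1⟩
    rw [getD_min_eq_min' him, le_min_iff]
    unfold predB
    constructor
    · rintro ⟨hrge, hs⟩
      refine ⟨h1, ?_, hs⟩
      intro b hb hcard
      refine le_trans hrge (Finset.min'_le _ _ ?_)
      exact Finset.mem_image_of_mem _ (Finset.mem_filter.mpr ⟨hb, hcard⟩)
    · rintro ⟨-, hns, hs⟩
      refine ⟨?_, hs⟩
      rw [Finset.le_min'_iff]
      intro y hy
      obtain ⟨b, hb, rfl⟩ := Finset.mem_image.mp hy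
      rw [Finset.mem_filter] at hb
      exact hns b hb.1 hb.2

lemma Y_pos (hn : 1 ≤ n) : 1 ≤ Y n P := by
  rw [Y]
  by_cases h1 : ({1} : Finset ℕ) ∈ P.parts
  · simp [h1]
  · rw [if_neg h1, le_min_iff]
    constructor
    · have hb1 : block1 n P ∈ P.parts.filter (fun B => 2 ≤ B.card) := by
        rw [Finset.mem_filter]
        exact ⟨block1_mem hn, block1_card hn h1⟩
      have him : ((P.parts.filter (fun B => 2 ≤ B.card)).image blockMax).Nonempty :=
        ⟨_, Finset.mem_image_of_mem _ hb1⟩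
      rw [getD_min_eq_min' him]
      have := Finset.min'_mem _ him
      obtain ⟨b, hb, heq⟩ := Finset.mem_image.mp this
      rw [← heq]
      rw [Finset.mem_filter] at hb
      have hbne : b.Nonempty := P.nonempty_of_mem_parts hb.1
      exact le_trans (one_le_of_mem_part hb.1 (blockMax_mem hbne)) le_rfl
    · have := secondMin_mem hn h1
      exact one_le_of_mem_part (block1_mem hn) (Finset.mem_of_mem_erase this)

-- sets for phi
def lowSet (n k : ℕ) (P : Finpartition (Finset.Icc 1 n)) : Finset ℕ :=
  (block1 n P).filter (fun j => 2 ≤ j ∧ j < k)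

def upSet (n k : ℕ) (P : Finpartition (Finset.Icc 1 n)) : Finset ℕ :=
  (block1 n P).filter (fun j => j = 1 ∨ k ≤ j)

lemma mem_upSet_iff {k j : ℕ} : j ∈ upSet n k P ↔ j ∈ block1 n P ∧ (j = 1 ∨ k ≤ j) := by
  simp [upSet]

lemma mem_lowSet_iff {k j : ℕ} : j ∈ lowSet n k P ↔ j ∈ block1 n P ∧ (2 ≤ j ∧ j < k) := by
  simp [lowSet]

lemma upSet_union_lowSet (hn : 1 ≤ n) (k : ℕ) :
    upSet n k P ∪ lowSet n k P = block1 n P := by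
  ext j
  simp only [Finset.mem_union, mem_upSet_iff, mem_lowSet_iff]
  constructor
  · rintro (⟨h, -⟩ | ⟨h, -⟩) <;> exact h
  · intro h
    have h1 : 1 ≤ j := one_le_of_mem_part (block1_mem hn) h
    by_cases hc : 2 ≤ j ∧ j < k
    · exact Or.inr ⟨h, hc⟩
    · exact Or.inl ⟨h, by omega⟩

lemma disjoint_upSet_lowSet (k : ℕ) : Disjoint (upSet n k P) (lowSet n k P) := by
  rw [Finset.disjoint_left]
  intro j hj hj'
  rw [mem_upSet_iff] at hj
  rw [mem_lowSet_iff] at hj'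
  omega

lemma one_mem_upSet (hn : 1 ≤ n) (k : ℕ) : (1:ℕ) ∈ upSet n k P :=
  mem_upSet_iff.mpr ⟨one_mem_block1 hn, Or.inl rfl⟩

def phiParts (n k : ℕ) (P : Finpartition (Finset.Icc 1 n)) : Finset (Finset ℕ) :=
  insert (upSet n k P)
    ((P.parts.erase (block1 n P)) ∪ (lowSet n k P).image (fun j => {j}))

lemma mem_phiParts {k : ℕ} {b : Finset ℕ} :
    b ∈ phiParts n k P ↔ b = upSet n k P ∨ (b ∈ P.parts ∧ b ≠ block1 n P) ∨
      ∃ j ∈ lowSet n k P, b = {j} := by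
  simp only [phiParts, Finset.mem_insert, Finset.mem_union, Finset.mem_erase,
    Finset.mem_image]
  constructor
  · rintro (h | ⟨h1, h2⟩ | ⟨j, hj, rfl⟩)
    · exact Or.inl h
    · exact Or.inr (Or.inl ⟨h2, h1⟩)
    · exact Or.inr (Or.inr ⟨j, hj, rfl⟩)
  · rintro (h | ⟨h1, h2⟩ | ⟨j, hj, rfl⟩)
    · exact Or.inl h
    · exact Or.inr (Or.inl ⟨h2, h1⟩)
    · exact Or.inr (Or.inr ⟨j, hj, rfl⟩)

lemma phiParts_subset_ground (hn : 1 ≤ n) {k : ℕ} {b : Finset ℕ}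
    (hb : b ∈ phiParts n k P) : b ⊆ Finset.Icc 1 n := by
  rw [mem_phiParts] at hb
  rcases hb with rfl | ⟨h1, -⟩ | ⟨j, hj, rfl⟩
  · exact (Finset.filter_subset _ _).trans (part_subset (block1_mem hn))
  · exact part_subset h1
  · rw [Finset.singleton_subset_iff]
    exact part_subset (block1_mem hn) ((Finset.filter_subset _ _) hj)

lemma not_mem_block1 {b : Finset ℕ} (hb : b ∈ P.parts) (hne : b ≠ block1 n P)
    {x : ℕ} (hx : x ∈ b) : x ∉ block1 n P := by
  intro hx'
  by_cases hn : 1 ≤ n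
  · exact hne (P.eq_of_mem_parts hb (block1_mem hn) hx hx')
  · exact hne ((block1_spec hb (by
      have := part_subset hb hx
      rw [Finset.mem_Icc] at this
      omega)).symm)

lemma phiParts_eq_of_mem (hn : 1 ≤ n) {k : ℕ} {b c : Finset ℕ} {x : ℕ}
    (hb : b ∈ phiParts n k P) (hc : c ∈ phiParts n k P) (hxb : x ∈ b) (hxc : x ∈ c) :
    b = c := by
  rw [mem_phiParts] at hb hc
  have up_low : ∀ y, y ∈ upSet n k P → y ∉ lowSet n k P :=
    fun y hy => Finset.disjoint_left.mp (disjoint_upSet_lowSet _) hy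
  rcases hb with rfl | ⟨hb1, hb2⟩ | ⟨j, hj, rfl⟩ <;>
    rcases hc with rfl | ⟨hc1, hc2⟩ | ⟨i, hi, rfl⟩
  · rfl
  · exact absurd ((Finset.filter_subset _ _) hxb) (not_mem_block1 hc1 hc2 hxc)
  · rw [Finset.mem_singleton] at hxc; subst hxc
    exact absurd hi (up_low _ hxb)
  · exact absurd ((Finset.filter_subset _ _) hxc) (not_mem_block1 hb1 hb2 hxb)
  · exact P.eq_of_mem_parts hb1 hc1 hxb hxc
  · rw [Finset.mem_singleton] at hxc; subst hxc
    exact absurd ((Finset.filter_subset _ _) hi) (not_mem_block1 hb1 hb2 hxb)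
  · rw [Finset.mem_singleton] at hxb; subst hxb
    exact absurd hj (up_low _ hxc)
  · rw [Finset.mem_singleton] at hxb; subst hxb
    exact absurd ((Finset.filter_subset _ _) hj) (not_mem_block1 hc1 hc2 hxc)
  · rw [Finset.mem_singleton] at hxb hxc
    rw [← hxb, ← hxc]

lemma phiParts_disj (hn : 1 ≤ n) {k : ℕ} {b c : Finset ℕ}
    (hb : b ∈ phiParts n k P) (hc : c ∈ phiParts n k P) (hbc : b ≠ c) :
    Disjoint b c := by
  rw [Finset.disjoint_left]
  intro x hxb hxc
  exact hbc (phiParts_eq_of_mem hn hb hc hxb hxc)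

def phi (n k : ℕ) (hn : 1 ≤ n) (P : Finpartition (Finset.Icc 1 n)) :
    Finpartition (Finset.Icc 1 n) where
  parts := phiParts n k P
  supIndep := by
    rw [Finset.supIndep_iff_pairwiseDisjoint]
    intro b hb c hc hbc
    exact phiParts_disj hn hb hc hbc
  sup_parts := by
    apply le_antisymm
    · apply Finset.sup_le
      intro b hb
      exact phiParts_subset_ground hn hb
    · intro x hx
      rw [Finset.mem_sup]
      obtain ⟨b, hb, hxb⟩ := P.exists_mem hx
      by_cases hbl : b = block1 n P
      · subst hbl
        have : x ∈ upSet n k P ∪ lowSet n k P := by rw [upSet_union_lowSet hn]; exact hxb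
        rw [Finset.mem_union] at this
        rcases this with h | h
        · exact ⟨upSet n k P, mem_phiParts.mpr (Or.inl rfl), h⟩
        · exact ⟨{x}, mem_phiParts.mpr (Or.inr (Or.inr ⟨x, h, rfl⟩)),
            Finset.mem_singleton_self x⟩
      · exact ⟨b, mem_phiParts.mpr (Or.inr (Or.inl ⟨hb, hbl⟩)), hxb⟩
  bot_notMem := by
    intro h
    rw [bot_eq_empty, mem_phiParts] at h
    rcases h with h | ⟨h1, -⟩ | ⟨j, -, h⟩
    · exact absurd (one_mem_upSet hn _) (by rw [← h]; exact Finset.notMem_empty 1)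
    · exact P.bot_notMem h1
    · exact absurd (h ▸ Finset.mem_singleton_self j) (Finset.notMem_empty j)

lemma phi_parts {k : ℕ} (hn : 1 ≤ n) : (phi n k hn P).parts = phiParts n k P := rfl

-- psi construction
def sSet (n k : ℕ) (Q : Finpartition (Finset.Icc 1 n)) : Finset ℕ :=
  (Finset.Icc 2 (k-1)).filter (fun j => {j} ∈ Q.parts)

open Classical in
noncomputable def keepSet (n k : ℕ) (Q : Finpartition (Finset.Icc 1 n)) : Finset (Finset ℕ) :=
  Q.parts.filter (fun b => (1:ℕ) ∉ b ∧ ∀ j ∈ Finset.Icc 2 (k-1), b ≠ {j})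

def mergedSet (n k : ℕ) (Q : Finpartition (Finset.Icc 1 n)) : Finset ℕ :=
  block1 n Q ∪ sSet n k Q

noncomputable def psiParts (n k : ℕ) (Q : Finpartition (Finset.Icc 1 n)) : Finset (Finset ℕ) :=
  insert (mergedSet n k Q) (keepSet n k Q)

variable {Q : Finpartition (Finset.Icc 1 n)}

lemma mem_sSet_iff {k j : ℕ} : j ∈ sSet n k Q ↔ (2 ≤ j ∧ j ≤ k - 1) ∧ {j} ∈ Q.parts := by
  simp [sSet, Finset.mem_Icc]

lemma mem_keepSet_iff {k : ℕ} {b : Finset ℕ} :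
    b ∈ keepSet n k Q ↔ b ∈ Q.parts ∧ (1:ℕ) ∉ b ∧ ∀ j ∈ Finset.Icc 2 (k-1), b ≠ {j} := by
  simp [keepSet, Finset.mem_filter]

lemma one_mem_merged (hn : 1 ≤ n) (k : ℕ) : (1:ℕ) ∈ mergedSet n k Q :=
  Finset.mem_union_left _ (one_mem_block1 hn)

lemma mergedSet_subset (hn : 1 ≤ n) (k : ℕ) : mergedSet n k Q ⊆ Finset.Icc 1 n := by
  apply Finset.union_subset (part_subset (block1_mem hn))
  intro j hj
  rw [mem_sSet_iff] at hj
  exact part_subset hj.2 (Finset.mem_singleton_self j)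

lemma psiParts_eq_of_mem (hn : 1 ≤ n) {k : ℕ} {b c : Finset ℕ} {x : ℕ}
    (hb : b ∈ psiParts n k Q) (hc : c ∈ psiParts n k Q) (hxb : x ∈ b) (hxc : x ∈ c) :
    b = c := by
  have key : ∀ c, c ∈ keepSet n k Q → x ∈ c → x ∈ mergedSet n k Q → False := by
    intro c hc hxc hxm
    rw [mem_keepSet_iff] at hc
    rw [mergedSet, Finset.mem_union] at hxm
    rcases hxm with h | h
    · have : c = block1 n Q := Q.eq_of_mem_parts hc.1 (block1_mem hn) hxc h
      exact hc.2.1 (this ▸ one_mem_block1 hn)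
    · rw [mem_sSet_iff] at h
      have : c = {x} := Q.eq_of_mem_parts hc.1 h.2 hxc (Finset.mem_singleton_self x)
      exact hc.2.2 x (Finset.mem_Icc.mpr h.1) this
  rw [psiParts, Finset.mem_insert] at hb hc
  rcases hb with rfl | hb <;> rcases hc with rfl | hc
  · rfl
  · exact absurd (key c hc hxc hxb) not_false
  · exact absurd (key b hb hxb hxc) not_false
  · rw [mem_keepSet_iff] at hb hc
    exact Q.eq_of_mem_parts hb.1 hc.1 hxb hxc

lemma psiParts_disj (hn : 1 ≤ n) {k : ℕ} {b c : Finset ℕ}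
    (hb : b ∈ psiParts n k Q) (hc : c ∈ psiParts n k Q) (hbc : b ≠ c) :
    Disjoint b c := by
  rw [Finset.disjoint_left]
  intro x hxb hxc
  exact hbc (psiParts_eq_of_mem hn hb hc hxb hxc)

noncomputable def psi (n k : ℕ) (hn : 1 ≤ n) (Q : Finpartition (Finset.Icc 1 n)) :
    Finpartition (Finset.Icc 1 n) where
  parts := psiParts n k Q
  supIndep := by
    rw [Finset.supIndep_iff_pairwiseDisjoint]
    intro b hb c hc hbc
    exact psiParts_disj hn hb hc hbc
  sup_parts := by
    apply le_antisymm
    · apply Finset.sup_le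
      intro b hb
      rw [psiParts, Finset.mem_insert] at hb
      rcases hb with rfl | hb
      · exact mergedSet_subset hn _
      · exact part_subset (mem_keepSet_iff.mp hb).1
    · intro x hx
      rw [Finset.mem_sup]
      obtain ⟨b, hb, hxb⟩ := Q.exists_mem hx
      by_cases h1 : (1:ℕ) ∈ b
      · refine ⟨mergedSet n k Q, Finset.mem_insert_self _ _, ?_⟩
        simp only [id_eq, mergedSet, Finset.mem_union]
        exact Or.inl ((block1_spec hb h1) ▸ hxb)
      · by_cases h2 : ∃ j ∈ Finset.Icc 2 (k-1), b = {j}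
        · obtain ⟨j, hj, rfl⟩ := h2
          rw [Finset.mem_singleton] at hxb
          subst hxb
          refine ⟨mergedSet n k Q, Finset.mem_insert_self _ _, ?_⟩
          simp only [id_eq, mergedSet, Finset.mem_union, mem_sSet_iff]
          exact Or.inr ⟨Finset.mem_Icc.mp hj, hb⟩
        · push_neg at h2
          exact ⟨b, Finset.mem_insert_of_mem (mem_keepSet_iff.mpr ⟨hb, h1, h2⟩), hxb⟩
  bot_notMem := by
    intro h
    rw [psiParts, bot_eq_empty, Finset.mem_insert] at h
    rcases h with h | h
    · exact absurd (one_mem_merged hn _ (Q := Q)) (by rw [← h]; exact Finset.notMem_empty 1)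
    · exact Q.bot_notMem (mem_keepSet_iff.mp h).1

lemma psi_parts {k : ℕ} (hn : 1 ≤ n) : (psi n k hn Q).parts = psiParts n k Q := rfl

-- helper
lemma getD_min_mem {s : Finset ℕ} (hs : s.Nonempty) : s.min.getD 0 ∈ s := by
  rw [getD_min_eq_min' hs]; exact s.min'_mem hs

-- span lemmas
lemma blockSpan_upSet (hn : 1 ≤ n) {k : ℕ} (hA : k ≤ blockMax (block1 n P)) :
    blockSpan (upSet n k P) = blockSpan (block1 n P) := by
  have hb1ne : (block1 n P).Nonempty := ⟨1, one_mem_block1 hn⟩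
  have hMmem : blockMax (block1 n P) ∈ upSet n k P :=
    mem_upSet_iff.mpr ⟨blockMax_mem hb1ne, Or.inr hA⟩
  have hmax : blockMax (upSet n k P) = blockMax (block1 n P) := by
    apply le_antisymm
    · exact Finset.sup_mono (Finset.filter_subset _ _)
    · exact le_blockMax hMmem
  have hmin : blockMin (upSet n k P) = 1 := by
    apply le_antisymm (blockMin_le (one_mem_upSet hn k))
    exact one_le_of_mem_part (block1_mem hn)
      ((Finset.filter_subset _ _) (blockMin_mem ⟨1, one_mem_upSet hn k⟩))
  rw [blockSpan, blockSpan, hmax, hmin, blockMin_block1 hn]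

lemma blockMax_merged (hn : 1 ≤ n) {k : ℕ}
    (hA : k ≤ blockMax (block1 n Q)) :
    blockMax (mergedSet n k Q) = blockMax (block1 n Q) := by
  apply le_antisymm
  · apply Finset.sup_le
    intro j hj
    rw [mergedSet, Finset.mem_union] at hj
    rcases hj with hj | hj
    · exact le_blockMax hj
    · rw [mem_sSet_iff] at hj
      simp only [id_eq]
      have h1 : j ≤ k - 1 := hj.1.2
      have h2 : 2 ≤ j := hj.1.1
      omega
  · exact Finset.sup_mono Finset.subset_union_left

lemma blockSpan_merged (hn : 1 ≤ n) {k : ℕ} (hA : k ≤ blockMax (block1 n Q)) :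
    blockSpan (mergedSet n k Q) = blockSpan (block1 n Q) := by
  have hmin : blockMin (mergedSet n k Q) = 1 := by
    apply le_antisymm (blockMin_le (one_mem_merged hn k))
    have := blockMin_mem ⟨1, one_mem_merged hn k (Q := Q)⟩
    have := mergedSet_subset hn k this
    rw [Finset.mem_Icc] at this
    exact this.1
  rw [blockSpan, blockSpan, blockMax_merged hn hA, hmin, blockMin_block1 hn]

lemma singleton_span_cases (j : ℕ) (t : Finset ℕ) :
    Disjoint (blockSpan ({j} : Finset ℕ)) t ∨ blockSpan ({j} : Finset ℕ) ⊆ t := by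
  rw [blockSpan_singleton]
  by_cases h : j ∈ t
  · exact Or.inr (Finset.singleton_subset_iff.mpr h)
  · exact Or.inl (Finset.disjoint_singleton_left.mpr h)

lemma nonov_phi (hn : 1 ≤ n) {k : ℕ} (hP : Nonoverlapping n P) (hA : predA n k P) :
    Nonoverlapping n (phi n k hn P) := by
  have hb1 : k ≤ blockMax (block1 n P) := hA _ (block1_mem hn)
  -- spans of non-singleton parts of phi are spans of parts of P
  have key : ∀ b ∈ phiParts n k P, (∃ j, b = {j}) ∨
      ∃ b' ∈ P.parts, blockSpan b = blockSpan b' := by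
    intro b hb
    rw [mem_phiParts] at hb
    rcases hb with rfl | ⟨h1, -⟩ | ⟨j, -, rfl⟩
    · exact Or.inr ⟨block1 n P, block1_mem hn, blockSpan_upSet hn hb1⟩
    · exact Or.inr ⟨b, h1, rfl⟩
    · exact Or.inl ⟨j, rfl⟩
  intro b hb c hc
  rw [phi_parts] at hb hc
  rcases key b hb with ⟨j, rfl⟩ | ⟨b', hb', hsb⟩
  · rcases singleton_span_cases j (blockSpan c) with h | h
    · exact Or.inl h
    · exact Or.inr (Or.inl h)
  · rcases key c hc with ⟨j, rfl⟩ | ⟨c', hc', hsc⟩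
    · rcases singleton_span_cases j (blockSpan b) with h | h
      · exact Or.inl h.symm
      · exact Or.inr (Or.inr h)
    · rw [hsb, hsc]
      exact hP b' hb' c' hc'

lemma nonov_psi (hn : 1 ≤ n) {k : ℕ} (hQ : Nonoverlapping n Q)
    (hb1 : k ≤ blockMax (block1 n Q)) :
    Nonoverlapping n (psi n k hn Q) := by
  have key : ∀ b ∈ psiParts n k Q, ∃ b' ∈ Q.parts, blockSpan b = blockSpan b' := by
    intro b hb
    rw [psiParts, Finset.mem_insert] at hb
    rcases hb with rfl | hb
    · exact ⟨block1 n Q, block1_mem hn, blockSpan_merged hn hb1⟩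
    · exact ⟨b, (mem_keepSet_iff.mp hb).1, rfl⟩
  intro b hb c hc
  rw [psi_parts] at hb hc
  obtain ⟨b', hb', hsb⟩ := key b hb
  obtain ⟨c', hc', hsc⟩ := key c hc
  rw [hsb, hsc]
  exact hQ b' hb' c' hc'

lemma block1_phi (hn : 1 ≤ n) {k : ℕ} :
    block1 n (phi n k hn P) = upSet n k P :=
  block1_spec (P := phi n k hn P) (mem_phiParts.mpr (Or.inl rfl)) (one_mem_upSet hn k)

lemma predB_phi (hn : 1 ≤ n) {k : ℕ} (hk : 2 ≤ k) (hA : predA n k P) :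
    predB n k (phi n k hn P) := by
  have hb1 : k ≤ blockMax (block1 n P) := hA _ (block1_mem hn)
  have hb1ne : (block1 n P).Nonempty := ⟨1, one_mem_block1 hn⟩
  have hMup : blockMax (block1 n P) ∈ upSet n k P :=
    mem_upSet_iff.mpr ⟨blockMax_mem hb1ne, Or.inr hb1⟩
  have hupmax : blockMax (upSet n k P) = blockMax (block1 n P) :=
    le_antisymm (Finset.sup_mono (Finset.filter_subset _ _)) (le_blockMax hMup)
  refine ⟨?_, ?_, ?_⟩
  · -- {1} ∉ parts
    intro h
    rw [phi_parts, mem_phiParts] at h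
    rcases h with h | ⟨h1, h2⟩ | ⟨j, hj, h⟩
    · have : blockMax (block1 n P) ∈ ({1} : Finset ℕ) := h ▸ hMup
      rw [Finset.mem_singleton] at this
      omega
    · exact h2 (block1_spec h1 (Finset.mem_singleton_self 1)).symm
    · rw [Finset.singleton_inj] at h
      rw [mem_lowSet_iff] at hj
      omega
  · -- non-singleton blocks have max ≥ k
    intro b hb hcard
    rw [phi_parts, mem_phiParts] at hb
    rcases hb with rfl | ⟨h1, -⟩ | ⟨j, -, rfl⟩
    · rw [hupmax]; exact hb1
    · exact hA b h1
    · simp at hcard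
  · -- secondMin ≥ k
    rw [block1_phi hn]
    have hmin : blockMin (upSet n k P) = 1 := by
      apply le_antisymm (blockMin_le (one_mem_upSet hn k))
      exact one_le_of_mem_part (block1_mem hn)
        ((Finset.filter_subset _ _) (blockMin_mem ⟨1, one_mem_upSet hn k⟩))
    rw [secondMin, hmin]
    have hne : ((upSet n k P).erase 1).Nonempty := by
      refine ⟨blockMax (block1 n P), Finset.mem_erase.mpr ⟨?_, hMup⟩⟩
      omega
    have hmem := getD_min_mem hne
    rw [Finset.mem_erase, mem_upSet_iff] at hmem
    rcases hmem.2.2 with h | h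
    · exact absurd h hmem.1
    · exact h

lemma predA_psi (hn : 1 ≤ n) {k : ℕ} (hk : 2 ≤ k) (hB : predB n k Q) :
    predA n k (psi n k hn Q) := by
  obtain ⟨h1, hns, hs⟩ := hB
  have hb1 : k ≤ blockMax (block1 n Q) := hns _ (block1_mem hn) (block1_card hn h1)
  intro b hb
  rw [psi_parts, psiParts, Finset.mem_insert] at hb
  rcases hb with rfl | hb
  · rw [blockMax_merged hn hb1]; exact hb1
  · rw [mem_keepSet_iff] at hb
    obtain ⟨hbm, hb1', hbj⟩ := hb
    by_cases hcard : 2 ≤ b.card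
    · exact hns b hbm hcard
    · have hbne : b.Nonempty := Q.nonempty_of_mem_parts hbm
      have : b.card = 1 := by
        have := Finset.card_pos.mpr hbne
        omega
      obtain ⟨j, rfl⟩ := Finset.card_eq_one.mp this
      have hj1 : 1 ≤ j := one_le_of_mem_part hbm (Finset.mem_singleton_self j)
      have hj2 : j ≠ 1 := fun h => hb1' (h ▸ Finset.mem_singleton_self j)
      have hj3 : j ∉ Finset.Icc 2 (k-1) := fun h => hbj j h rfl
      rw [Finset.mem_Icc] at hj3
      rw [blockMax_singleton]
      omega

-- composition: psi ∘ phi = id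
lemma sSet_phi (hn : 1 ≤ n) {k : ℕ} (hk : 2 ≤ k) (hA : predA n k P) :
    sSet n k (phi n k hn P) = lowSet n k P := by
  ext j
  rw [mem_sSet_iff, phi_parts, mem_phiParts, mem_lowSet_iff]
  constructor
  · rintro ⟨⟨hj2, hjk⟩, h | ⟨h1, -⟩ | ⟨i, hi, h⟩⟩
    · exfalso
      have h1 := one_mem_upSet (P := P) hn k
      rw [← h, Finset.mem_singleton] at h1
      omega
    · exfalso
      have := hA _ h1
      rw [blockMax_singleton] at this
      omega
    · rw [Finset.singleton_inj] at h
      subst h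
      exact mem_lowSet_iff.mp hi
  · rintro ⟨hmem, hj2, hjk⟩
    exact ⟨⟨hj2, by omega⟩,
      Or.inr (Or.inr ⟨j, mem_lowSet_iff.mpr ⟨hmem, hj2, hjk⟩, rfl⟩)⟩

lemma keepSet_phi (hn : 1 ≤ n) {k : ℕ} (hk : 2 ≤ k) (hA : predA n k P) :
    keepSet n k (phi n k hn P) = P.parts.erase (block1 n P) := by
  ext b
  rw [mem_keepSet_iff]
  constructor
  · rintro ⟨hb, h1, hj⟩
    rw [phi_parts, mem_phiParts] at hb
    rcases hb with rfl | ⟨hb1, hb2⟩ | ⟨j, hjlow, rfl⟩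
    · exact absurd (one_mem_upSet hn k) h1
    · exact Finset.mem_erase.mpr ⟨hb2, hb1⟩
    · rw [mem_lowSet_iff] at hjlow
      exact absurd rfl (hj j (Finset.mem_Icc.mpr ⟨hjlow.2.1, by omega⟩))
  · intro hb
    rw [Finset.mem_erase] at hb
    refine ⟨mem_phiParts.mpr (Or.inr (Or.inl ⟨hb.2, hb.1⟩)), ?_, ?_⟩
    · intro h1
      exact hb.1 (block1_spec hb.2 h1).symm
    · rintro j hj rfl
      have := hA _ hb.2
      rw [blockMax_singleton] at this
      rw [Finset.mem_Icc] at hj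
      omega

lemma psi_phi (hn : 1 ≤ n) {k : ℕ} (hk : 2 ≤ k) (hA : predA n k P) :
    psi n k hn (phi n k hn P) = P := by
  apply Finpartition.ext
  rw [psi_parts, psiParts, mergedSet, block1_phi hn, sSet_phi hn hk hA,
    keepSet_phi hn hk hA, upSet_union_lowSet hn, Finset.insert_erase (block1_mem hn)]

-- composition: phi ∘ psi = id
lemma block1_psi (hn : 1 ≤ n) {k : ℕ} :
    block1 n (psi n k hn Q) = mergedSet n k Q :=
  block1_spec (P := psi n k hn Q) (Finset.mem_insert_self _ _) (one_mem_merged hn k)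

lemma block1_elts (hn : 1 ≤ n) {k : ℕ} (h1 : ({1} : Finset ℕ) ∉ Q.parts)
    (hs : k ≤ secondMin (block1 n Q)) :
    ∀ j ∈ block1 n Q, j = 1 ∨ k ≤ j := by
  intro j hj
  by_cases hj1 : j = 1
  · exact Or.inl hj1
  · exact Or.inr (le_trans hs (secondMin_le hn h1 (Finset.mem_erase.mpr ⟨hj1, hj⟩)))

lemma upSet_psi (hn : 1 ≤ n) {k : ℕ} (hk : 2 ≤ k) (hB : predB n k Q) :
    upSet n k (psi n k hn Q) = block1 n Q := by
  obtain ⟨h1, hns, hs⟩ := hB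
  ext j
  rw [mem_upSet_iff, block1_psi hn, mergedSet, Finset.mem_union, mem_sSet_iff]
  constructor
  · rintro ⟨hj | hj, hcond⟩
    · exact hj
    · exfalso
      obtain ⟨⟨hj2, hjk⟩, -⟩ := hj
      omega
  · intro hj
    exact ⟨Or.inl hj, block1_elts hn h1 hs j hj⟩

lemma lowSet_psi (hn : 1 ≤ n) {k : ℕ} (hk : 2 ≤ k) (hB : predB n k Q) :
    lowSet n k (psi n k hn Q) = sSet n k Q := by
  obtain ⟨h1, hns, hs⟩ := hB
  ext j
  rw [mem_lowSet_iff, block1_psi hn, mergedSet, Finset.mem_union, mem_sSet_iff]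
  constructor
  · rintro ⟨hj | hj, hj2, hjk⟩
    · rcases block1_elts hn h1 hs j hj with h | h <;> omega
    · exact mem_sSet_iff.mp (mem_sSet_iff.mpr hj)
  · intro hj
    have hj2 : 2 ≤ j := hj.1.1
    have hjk : j ≤ k - 1 := hj.1.2
    exact ⟨Or.inr hj, hj2, by omega⟩

lemma merged_not_mem_keepSet (hn : 1 ≤ n) {k : ℕ} :
    mergedSet n k Q ∉ keepSet n k Q := by
  intro h
  exact (mem_keepSet_iff.mp h).2.1 (one_mem_merged hn k)

lemma phi_psi (hn : 1 ≤ n) {k : ℕ} (hk : 2 ≤ k) (hB : predB n k Q) :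
    phi n k hn (psi n k hn Q) = Q := by
  apply Finpartition.ext
  rw [phi_parts, phiParts, upSet_psi hn hk hB, lowSet_psi hn hk hB, psi_parts,
    block1_psi hn, psiParts, Finset.erase_insert (merged_not_mem_keepSet hn)]
  ext b
  rw [Finset.mem_insert, Finset.mem_union]
  constructor
  · rintro (rfl | hb | hb)
    · exact block1_mem hn
    · exact (mem_keepSet_iff.mp hb).1
    · obtain ⟨j, hj, rfl⟩ := Finset.mem_image.mp hb
      exact (mem_sSet_iff.mp hj).2
  · intro hb
    by_cases h1 : (1:ℕ) ∈ b
    · exact Or.inl (block1_spec hb h1).symm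
    · by_cases h2 : ∃ j ∈ Finset.Icc 2 (k-1), b = {j}
      · obtain ⟨j, hj, rfl⟩ := h2
        refine Or.inr (Or.inr (Finset.mem_image.mpr ⟨j, ?_, rfl⟩))
        rw [Finset.mem_Icc] at hj
        exact mem_sSet_iff.mpr ⟨hj, hb⟩
      · push_neg at h2
        exact Or.inr (Or.inl (mem_keepSet_iff.mpr ⟨hb, h1, h2⟩))

-- cardinality equality of ≥-sets
lemma card_ge_eq (hn : 1 ≤ n) (k : ℕ) :
    Nat.card {P : Finpartition (Finset.Icc 1 n) // Nonoverlapping n P ∧ k ≤ X n P} =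
      Nat.card {P : Finpartition (Finset.Icc 1 n) // Nonoverlapping n P ∧ k ≤ Y n P} := by
  by_cases hk : 2 ≤ k
  · apply Nat.card_congr
    refine
      { toFun := fun p => ⟨phi n k hn p.1, ?_, ?_⟩
        invFun := fun q => ⟨psi n k hn q.1, ?_, ?_⟩
        left_inv := ?_
        right_inv := ?_ }
    · exact nonov_phi hn p.2.1 ((X_ge_iff hn k).mp p.2.2)
    · exact (Y_ge_iff hn hk).mpr (predB_phi hn hk ((X_ge_iff hn k).mp p.2.2))
    · have hB := (Y_ge_iff hn hk).mp q.2.2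
      exact nonov_psi hn q.2.1 (hB.2.1 _ (block1_mem hn) (block1_card hn hB.1))
    · exact (X_ge_iff hn k).mpr (predA_psi hn hk ((Y_ge_iff hn hk).mp q.2.2))
    · rintro ⟨P, hP⟩
      exact Subtype.ext (psi_phi hn hk ((X_ge_iff hn k).mp hP.2))
    · rintro ⟨Q, hQ⟩
      exact Subtype.ext (phi_psi hn hk ((Y_ge_iff hn hk).mp hQ.2))
  · apply Nat.card_congr
    apply Equiv.subtypeEquivRight
    intro P
    have hX : k ≤ X n P := by
      have h1 : 1 ≤ X n P := by
        rw [X_ge_iff hn]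
        intro b hb
        exact one_le_of_mem_part hb (blockMax_mem (P.nonempty_of_mem_parts hb))
      omega
    have hY : k ≤ Y n P := le_trans (by omega) (Y_pos hn)
    simp [hX, hY]

lemma card_split (pred stat : Finpartition (Finset.Icc 1 n) → Prop) [DecidablePred stat]
    (f : Finpartition (Finset.Icc 1 n) → ℕ) (k : ℕ) (hstat : ∀ P, stat P ↔ k ≤ f P) :
    Nat.card {P // pred P ∧ stat P} =
      Nat.card {P // pred P ∧ f P = k} + Nat.card {P // pred P ∧ k + 1 ≤ f P} := by
  classical
  have e : {P // pred P ∧ stat P} ≃ {P // (pred P ∧ f P = k) ∨ (pred P ∧ k + 1 ≤ f P)} := by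
    apply Equiv.subtypeEquivRight
    intro P
    rw [hstat]
    constructor
    · rintro ⟨hp, hf⟩
      rcases Nat.eq_or_lt_of_le hf with h | h
      · exact Or.inl ⟨hp, h.symm⟩
      · exact Or.inr ⟨hp, h⟩
    · rintro (⟨hp, hf⟩ | ⟨hp, hf⟩)
      · exact ⟨hp, hf.ge⟩
      · exact ⟨hp, by omega⟩
  rw [Nat.card_congr e, Nat.card_eq_fintype_card, Nat.card_eq_fintype_card,
    Nat.card_eq_fintype_card]
  apply Fintype.card_subtype_or_disjoint
  rintro r hr1 hr2 P hP
  obtain ⟨-, h1⟩ := hr1 P hP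
  obtain ⟨-, h2⟩ := hr2 P hP
  omega

/-- for n ≥ 1 and every k, the number of nonoverlapping partitions of
[n] with X = k equals the number with Y = k. -/
theorem statement15 (n : ℕ) (hn : 1 ≤ n) (k : ℕ) :
    Nat.card {P : Finpartition (Finset.Icc 1 n) // Nonoverlapping n P ∧ X n P = k} =
      Nat.card {P : Finpartition (Finset.Icc 1 n) // Nonoverlapping n P ∧ Y n P = k} := by
  classical
  have hXs : Nat.card {P : Finpartition (Finset.Icc 1 n) // Nonoverlapping n P ∧ k ≤ X n P} =
      Nat.card {P : Finpartition (Finset.Icc 1 n) // Nonoverlapping n P ∧ X n P = k} +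
      Nat.card {P : Finpartition (Finset.Icc 1 n) // Nonoverlapping n P ∧ k + 1 ≤ X n P} :=
    card_split (Nonoverlapping n) (fun P => k ≤ X n P) (X n) k (fun P => Iff.rfl)
  have hYs : Nat.card {P : Finpartition (Finset.Icc 1 n) // Nonoverlapping n P ∧ k ≤ Y n P} =
      Nat.card {P : Finpartition (Finset.Icc 1 n) // Nonoverlapping n P ∧ Y n P = k} +
      Nat.card {P : Finpartition (Finset.Icc 1 n) // Nonoverlapping n P ∧ k + 1 ≤ Y n P} :=
    card_split (Nonoverlapping n) (fun P => k ≤ Y n P) (Y n) k (fun P => Iff.rfl)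
  have h1 := card_ge_eq (n := n) hn k
  have h2 := card_ge_eq (n := n) hn (k + 1)
  omega
end

section
/- If P is a partition of [n] with X(P) < Y(P), then 1 is not in a singleton block of P, every block of P whose maximum is less than Y(P) other than the block containing 1 is a singleton, and the entry X(P) forms a singleton block. -/
lemma aux_blockMax_pos (n : ℕ) (P : Finpartition (Finset.Icc 1 n)) {B : Finset ℕ}
    (hB : B ∈ P.parts) : 1 ≤ blockMax B := by
  obtain ⟨x, hx⟩ := P.nonempty_of_mem_parts hB
  have hx1 : 1 ≤ x := (Finset.mem_Icc.mp (P.le hB hx)).1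
  exact le_trans hx1 (Finset.le_sup (f := id) hx)

lemma aux_Y_le (n : ℕ) (P : Finpartition (Finset.Icc 1 n)) {B : Finset ℕ}
    (hB : B ∈ P.parts) (hcard : 2 ≤ B.card) (h1 : ({1} : Finset ℕ) ∉ P.parts) :
    Y n P ≤ blockMax B := by
  have hmem : blockMax B ∈ (P.parts.filter (fun B => 2 ≤ B.card)).image blockMax :=
    Finset.mem_image_of_mem _ (Finset.mem_filter.mpr ⟨hB, hcard⟩)
  have hle := Finset.min_le hmem
  obtain ⟨m, hm⟩ := Finset.min_of_mem hmem
  rw [hm] at hle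
  have hmle : m ≤ blockMax B := by exact_mod_cast hle
  rw [Y, if_neg h1, hm]
  exact le_trans (min_le_left _ _) hmle

/-- if X(P) < Y(P) then {1} is not a block, every block other than the
block of 1 whose maximum is less than Y(P) is a singleton, and {X(P)} is a block. -/
theorem statement16 (n : ℕ) (hn : 1 ≤ n) (P : Finpartition (Finset.Icc 1 n))
    (h : X n P < Y n P) :
    ({1} : Finset ℕ) ∉ P.parts ∧
    (∀ B ∈ P.parts, blockMax B < Y n P → (1 : ℕ) ∉ B → B.card = 1) ∧
    ({X n P} : Finset ℕ) ∈ P.parts := by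
  -- the minimum X is attained
  have h1n : (1 : ℕ) ∈ Finset.Icc 1 n := Finset.mem_Icc.mpr ⟨le_refl 1, hn⟩
  obtain ⟨B1, hB1, h1B1⟩ := P.exists_mem h1n
  have hXmem : X n P ∈ P.parts.image blockMax := by
    obtain ⟨m, hm⟩ := Finset.min_of_mem (Finset.mem_image_of_mem blockMax hB1)
    have := Finset.mem_of_min hm
    rwa [X, hm]
  obtain ⟨B0, hB0, hB0X⟩ := Finset.mem_image.mp hXmem
  -- part 1
  have hX1 : 1 ≤ X n P := hB0X ▸ aux_blockMax_pos n P hB0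
  have p1 : ({1} : Finset ℕ) ∉ P.parts := by
    intro hmem
    rw [Y, if_pos hmem] at h
    omega
  -- part 2
  have p2 : ∀ B ∈ P.parts, blockMax B < Y n P → (1 : ℕ) ∉ B → B.card = 1 := by
    intro B hB hlt _
    by_contra hc
    have hne := P.nonempty_of_mem_parts hB
    have hcard : 2 ≤ B.card := by
      have := Finset.card_pos.mpr hne
      omega
    exact absurd (aux_Y_le n P hB hcard p1) (not_le.mpr hlt)
  -- part 3
  have hlt : blockMax B0 < Y n P := hB0X ▸ h
  have h1B0 : (1 : ℕ) ∉ B0 := by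
    intro h1
    have hcard1 : B0.card ≠ 1 := by
      intro hc
      obtain ⟨a, ha⟩ := Finset.card_eq_one.mp hc
      rw [ha] at h1
      have ha1 : a = 1 := (Finset.mem_singleton.mp h1).symm
      rw [ha, ha1] at hB0
      exact p1 hB0
    have hne := P.nonempty_of_mem_parts hB0
    have hcard : 2 ≤ B0.card := by
      have := Finset.card_pos.mpr hne
      omega
    exact absurd (aux_Y_le n P hB0 hcard p1) (not_le.mpr hlt)
  have hc1 : B0.card = 1 := p2 B0 hB0 hlt h1B0
  obtain ⟨a, ha⟩ := Finset.card_eq_one.mp hc1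
  have : blockMax B0 = a := by simp [ha, blockMax]
  refine ⟨p1, p2, ?_⟩
  rw [← hB0X, this, ← ha]
  exact hB0
end
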